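/- For the Bayesian logistic regression posterior f(β) on ℝ^p as above, lim_{‖β‖→∞} ‖∇f(β)‖² / (f(β)² ‖β‖²) = 1, and consequently lim_{‖β‖→∞} (β/‖β‖) · (∇f(β)/‖∇f(β)‖) = −1 < 0. -/

import Mathlib

/-!
The gradient of the log-posterior is `s β - β`, where the logistic score
`s β = ∑ᵢ (yᵢ - σ ⟪xᵢ, β⟫) • xᵢ` is bounded because the sigmoid `σ` takes values in `(0, 1)`.
Hence `∇f β = f β • (s β - β)` with `f β > 0`, and both quantities in the theorem only see the
vector `s β - β`, which is `-β` up to an error that is `o(‖β‖)`.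
-/

open Filter Topology Bornology Asymptotics InnerProductSpace Real
open scoped RealInnerProductSpace

section GradientCalculus

variable {F : Type*} [NormedAddCommGroup F] [InnerProductSpace ℝ F] [CompleteSpace F]
  {f g : F → ℝ} {f' g' x : F}

theorem HasGradientAt.sub (hf : HasGradientAt f f' x) (hg : HasGradientAt g g' x) :
    HasGradientAt (fun y => f y - g y) (f' - g') x := by
  rw [hasGradientAt_iff_hasFDerivAt, map_sub]
  exact hf.hasFDerivAt.sub hg.hasFDerivAt

theorem HasGradientAt.fun_sum {ι : Type*} {s : Finset ι} {A : ι → F → ℝ} {A' : ι → F}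
    (h : ∀ i ∈ s, HasGradientAt (A i) (A' i) x) :
    HasGradientAt (fun y => ∑ i ∈ s, A i y) (∑ i ∈ s, A' i) x := by
  rw [hasGradientAt_iff_hasFDerivAt, map_sum]
  exact HasFDerivAt.fun_sum fun i hi => (h i hi).hasFDerivAt

theorem HasDerivAt.comp_hasGradientAt {h : ℝ → ℝ} {h' : ℝ} (hh : HasDerivAt h h' (f x))
    (hf : HasGradientAt f f' x) : HasGradientAt (fun y => h (f y)) (h' • f') x := by
  rw [hasGradientAt_iff_hasFDerivAt, map_smulₛₗ, conj_trivial]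
  exact hh.comp_hasFDerivAt x hf.hasFDerivAt

theorem hasGradientAt_inner_right (a x : F) : HasGradientAt (fun y => ⟪a, y⟫) a x :=
  (toDual ℝ F a).hasFDerivAt

theorem hasGradientAt_norm_sq_div_two (x : F) : HasGradientAt (fun y => ‖y‖ ^ 2 / 2) x x := by
  have h := (hasStrictFDerivAt_norm_sq x).hasFDerivAt.mul_const (2⁻¹ : ℝ)
  simp only [← div_eq_mul_inv] at h
  refine h.congr_fderiv ?_
  ext y
  simp

end GradientCalculus

section Asymptotics

variable {E : Type*} [NormedAddCommGroup E] {r : E → E}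

theorem Asymptotics.IsLittleO.tendsto_norm_sub_self_div_norm (hr : r =o[cobounded E] id) :
    Tendsto (fun β => ‖r β - β‖ / ‖β‖) (cobounded E) (𝓝 1) := by
  rw [tendsto_iff_norm_sub_tendsto_zero]
  refine squeeze_zero' (Eventually.of_forall fun _ => norm_nonneg _) ?_
    hr.norm_norm.tendsto_div_nhds_zero
  filter_upwards [eventually_ne_cobounded 0] with β hβ
  have hβ' : 0 < ‖β‖ := norm_pos_iff.mpr hβ
  rw [Real.norm_eq_abs, div_sub_one hβ'.ne', abs_div, abs_of_pos hβ', id]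
  gcongr
  simpa using abs_norm_sub_norm_le (r β - β) (-β)

variable [InnerProductSpace ℝ E]

theorem Asymptotics.IsLittleO.tendsto_inner_normalize_sub_self (hr : r =o[cobounded E] id) :
    Tendsto (fun β => ⟪NormedSpace.normalize β, NormedSpace.normalize (r β - β)⟫)
      (cobounded E) (𝓝 (-1)) := by
  have hinner : Tendsto (fun β => ⟪β, r β⟫ / ‖β‖ ^ 2) (cobounded E) (𝓝 0) := by
    refine squeeze_zero_norm' ?_ hr.norm_norm.tendsto_div_nhds_zero
    filter_upwards [eventually_ne_cobounded 0] with β hβ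
    have hβ' : 0 < ‖β‖ := norm_pos_iff.mpr hβ
    calc ‖⟪β, r β⟫ / ‖β‖ ^ 2‖ ≤ ‖β‖ * ‖r β‖ / ‖β‖ ^ 2 := by
          rw [norm_div, norm_pow, _root_.norm_norm]
          gcongr
          exact norm_inner_le_norm β (r β)
      _ = ‖r β‖ / ‖id β‖ := by rw [id]; field_simp
  have hquot := (hinner.sub_const 1).div hr.tendsto_norm_sub_self_div_norm one_ne_zero
  rw [zero_sub, div_one] at hquot
  -- for `β ≠ 0` the direction cosine is `(⟪β, r β⟫ / ‖β‖ ^ 2 - 1) / (‖r β - β‖ / ‖β‖)`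
  refine hquot.congr' ?_
  filter_upwards [eventually_ne_cobounded 0] with β hβ
  have hβ' : ‖β‖ ≠ 0 := norm_ne_zero_iff.mpr hβ
  simp only [Pi.div_apply, NormedSpace.normalize, real_inner_smul_left, real_inner_smul_right,
    inner_sub_right, real_inner_self_eq_norm_sq]
  field_simp

end Asymptotics

/-- Minus the log-likelihood of a label `y ∈ {0, 1}` under the Bernoulli law of parameter
`sigmoid t`. -/
noncomputable def logisticLoss (y t : ℝ) : ℝ := (1 - y) * t + log (1 + exp (-t))

theorem hasDerivAt_logisticLoss (y t : ℝ) : HasDerivAt (logisticLoss y) (sigmoid t - y) t := by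
  have hlog := ((hasDerivAt_neg t).exp.const_add 1).log (by positivity)
  refine (((hasDerivAt_id' t).const_mul (1 - y)).add hlog).congr_deriv ?_
  rw [sigmoid_def]
  field_simp
  ring

section Logistic

variable {F ι : Type*} [NormedAddCommGroup F] [InnerProductSpace ℝ F] [Fintype ι]
  (x : ι → F) (y : ι → ℝ)

noncomputable def logisticScore (β : F) : F := ∑ i, (y i - sigmoid ⟪x i, β⟫) • x i

theorem norm_logisticScore_le (β : F) :
    ‖logisticScore x y β‖ ≤ ∑ i, (|y i| + 1) * ‖x i‖ := by
  refine (norm_sum_le _ _).trans (Finset.sum_le_sum fun i _ => ?_)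
  rw [norm_smul, Real.norm_eq_abs]
  gcongr
  rw [abs_le]
  constructor <;> linarith [neg_abs_le (y i), le_abs_self (y i), sigmoid_pos ⟪x i, β⟫,
    sigmoid_lt_one ⟪x i, β⟫]

theorem logisticScore_isLittleO : logisticScore x y =o[cobounded F] id := by
  refine IsBigO.trans_isLittleO (g := fun _ => ∑ i, (|y i| + 1) * ‖x i‖) ?_
    (isLittleO_const_id_cobounded _)
  refine IsBigO.of_bound' (Eventually.of_forall fun β => ?_)
  exact (norm_logisticScore_le x y β).trans (le_abs_self _)

noncomputable def logisticLogPosterior (c : ℝ) (β : F) : ℝ :=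
  c - ‖β‖ ^ 2 / 2 - ∑ i, logisticLoss (y i) ⟪x i, β⟫

theorem hasGradientAt_logisticLogPosterior [CompleteSpace F] (c : ℝ) (β : F) :
    HasGradientAt (logisticLogPosterior x y c) (logisticScore x y β - β) β := by
  have hloss : HasGradientAt (fun b => ∑ i, logisticLoss (y i) ⟪x i, b⟫)
      (∑ i, (sigmoid ⟪x i, β⟫ - y i) • x i) β :=
    HasGradientAt.fun_sum fun i _ =>
      (hasDerivAt_logisticLoss (y i) _).comp_hasGradientAt (hasGradientAt_inner_right (x i) β)
  have hscore : logisticScore x y β - β = 0 - β - ∑ i, (sigmoid ⟪x i, β⟫ - y i) • x i := by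
    simp only [logisticScore, sub_smul, Finset.sum_sub_distrib]
    abel
  rw [hscore]
  exact ((hasGradientAt_const β c).sub (hasGradientAt_norm_sq_div_two β)).sub hloss

end Logistic

theorem logistic_posterior_gradient_direction_limit_general
    {p K : ℕ} (x : Fin K → EuclideanSpace ℝ (Fin p)) (y : Fin K → ℝ)
    (c : ℝ) (f : EuclideanSpace ℝ (Fin p) → ℝ)
    (hf : ∀ β, f β = Real.exp
      (c - ‖β‖ ^ 2 / 2 - (∑ i, (1 - y i) * ⟪x i, β⟫)
        - ∑ i, Real.log (1 + Real.exp (-⟪x i, β⟫)))) :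
    Tendsto (fun β : EuclideanSpace ℝ (Fin p) =>
        ‖gradient f β‖ ^ 2 / (f β ^ 2 * ‖β‖ ^ 2))
      (Filter.comap norm atTop) (nhds 1) ∧
    Tendsto (fun β : EuclideanSpace ℝ (Fin p) =>
        ⟪‖β‖⁻¹ • β, ‖gradient f β‖⁻¹ • gradient f β⟫)
      (Filter.comap norm atTop) (nhds (-1)) ∧
    (-1 : ℝ) < 0 := by
  have hf_eq : f = fun β => exp (logisticLogPosterior x y c β) := by
    ext β
    rw [hf, logisticLogPosterior, sub_sub _ (∑ i, _), ← Finset.sum_add_distrib]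
    rfl
  have hf_pos : ∀ β, 0 < f β := fun β => hf_eq ▸ exp_pos _
  have hgrad : ∀ β, gradient f β = f β • (logisticScore x y β - β) := fun β => by
    rw [hf_eq]
    exact ((hasDerivAt_exp _).comp_hasGradientAt
      (hasGradientAt_logisticLogPosterior x y c β)).gradient
  have hr := logisticScore_isLittleO x y
  rw [comap_norm_atTop]
  refine ⟨?_, ?_, neg_one_lt_zero⟩
  · have hsq := hr.tendsto_norm_sub_self_div_norm.pow 2
    rw [one_pow] at hsq
    refine hsq.congr fun β => ?_
    rw [hgrad, norm_smul, Real.norm_eq_abs, abs_of_pos (hf_pos β), mul_pow, div_pow,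
      mul_div_mul_left _ _ (pow_ne_zero 2 (hf_pos β).ne')]
  · refine hr.tendsto_inner_normalize_sub_self.congr fun β => ?_
    rw [hgrad, ← NormedSpace.normalize_smul_of_pos (hf_pos β) (logisticScore x y β - β)]
    rfl

/-- For the Bayesian logistic regression posterior density `f β = exp (C β)` with
`C β = c - ‖β‖²/2 - ∑ᵢ (1 - yᵢ) ⟪xᵢ, β⟫ - ∑ᵢ log(1 + exp(-⟪xᵢ, β⟫))` and
`yᵢ ∈ {0, 1}`: as `‖β‖ → ∞`, `‖∇f(β)‖² / (f(β)² ‖β‖²) → 1` and consequently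
`(β/‖β‖) ⬝ (∇f(β)/‖∇f(β)‖) → -1 < 0`. -/
theorem logistic_posterior_gradient_direction_limit
    {p K : ℕ} (hp : 1 ≤ p) (hK : 1 ≤ K)
    (x : Fin K → EuclideanSpace ℝ (Fin p)) (y : Fin K → ℝ)
    (hy : ∀ i, y i = 0 ∨ y i = 1)
    (c : ℝ) (f : EuclideanSpace ℝ (Fin p) → ℝ)
    (hf : ∀ β, f β = Real.exp
      (c - ‖β‖ ^ 2 / 2 - (∑ i, (1 - y i) * ⟪x i, β⟫)
        - ∑ i, Real.log (1 + Real.exp (-⟪x i, β⟫)))) :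
    Tendsto (fun β : EuclideanSpace ℝ (Fin p) =>
        ‖gradient f β‖ ^ 2 / (f β ^ 2 * ‖β‖ ^ 2))
      (Filter.comap norm atTop) (nhds 1) ∧
    Tendsto (fun β : EuclideanSpace ℝ (Fin p) =>
        ⟪‖β‖⁻¹ • β, ‖gradient f β‖⁻¹ • gradient f β⟫)
      (Filter.comap norm atTop) (nhds (-1)) ∧
    (-1 : ℝ) < 0 :=
  logistic_posterior_gradient_direction_limit_general x y c f hf
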